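/- arXiv:1005.4442 — 2 statements merged into one kernel-verified Lean document; each statement's English description precedes it below -/
import Mathlib

section
/- Fix λ > 0. Let (φ_n) be a sequence of measurable functions on [0,1]² with values in [0,π], each a distributional solution of the sine-Gordon equation ∫ φ_n (∂²h/∂u∂v) = λ ∫ sin(φ_n) h for all test functions h ∈ C_c^∞((0,1)²). Suppose φ_n converges weakly in L²([0,1]²) to φ*. Then φ* takes values in [0,π] almost everywhere, and for every nonnegative h ∈ C_c^∞((0,1)²), ∫_{[0,1]²} φ* · (∂²h/∂u∂v) du dv − λ ∫_{[0,1]²} sin(φ*) · h du dv ≤ 0. -/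
open MeasureTheory Real
open scoped ENNReal

/-- The unit square `[0,1]²`. -/
def unitSq : Set (ℝ × ℝ) := Set.Icc (0:ℝ) 1 ×ˢ Set.Icc (0:ℝ) 1

/-- The mixed partial derivative `∂²g/∂u∂v`. -/
noncomputable def mixedPartial (g : ℝ × ℝ → ℝ) (p : ℝ × ℝ) : ℝ :=
  deriv (fun v => deriv (fun u => g (u, v)) p.1) p.2

/-- A measurable function `φ : [0,1]² → [0,π]` that is a distributional solution of the
sine-Gordon equation `φ_{uv} = λ sin φ`. -/
noncomputable def IsSGSolution (lam : ℝ) (φ : ℝ × ℝ → ℝ) : Prop :=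
  Measurable φ ∧ (∀ p ∈ unitSq, φ p ∈ Set.Icc 0 π) ∧
  ∀ g : ℝ × ℝ → ℝ, ContDiff ℝ (⊤ : ℕ∞) g →
    tsupport g ⊆ Set.Ioo (0:ℝ) 1 ×ˢ Set.Ioo (0:ℝ) 1 →
    ∫ p in unitSq, φ p * mixedPartial g p = lam * ∫ p in unitSq, Real.sin (φ p) * g p

lemma measurableSet_unitSq : MeasurableSet unitSq :=
  measurableSet_Icc.prod measurableSet_Icc

lemma isCompact_unitSq : IsCompact unitSq :=
  isCompact_Icc.prod isCompact_Icc

lemma mixedPartial_eq (g : ℝ × ℝ → ℝ) (hg : ContDiff ℝ (⊤ : ℕ∞) g) (p : ℝ × ℝ) :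
    mixedPartial g p = fderiv ℝ (fun q : ℝ×ℝ => fderiv ℝ g q (1,0)) p (0,1) := by
  have hslice : ∀ v x : ℝ, deriv (fun u => g (u, v)) x = fderiv ℝ g (x, v) (1,0) := by
    intro v x
    have h1 : HasFDerivAt (fun u : ℝ => (u, v)) (ContinuousLinearMap.inl ℝ ℝ ℝ) x :=
      HasFDerivAt.prodMk (hasFDerivAt_id x) (hasFDerivAt_const v x)
    have h2 := ((hg.differentiable (by simp) (x,v)).hasFDerivAt.comp x h1).hasDerivAt
    simpa [Function.comp_def] using h2.deriv
  set F := fun q : ℝ×ℝ => fderiv ℝ g q (1,0) with hF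
  have hFc : ContDiff ℝ (⊤ : ℕ∞) F := (hg.fderiv_right (by simp)).clm_apply contDiff_const
  have h1 : (fun v => deriv (fun u => g (u,v)) p.1) = fun v => F (p.1, v) :=
    funext fun v => hslice v p.1
  unfold mixedPartial
  rw [h1]
  have h2 : HasFDerivAt (fun v : ℝ => (p.1, v)) (ContinuousLinearMap.inr ℝ ℝ ℝ) p.2 :=
    HasFDerivAt.prodMk (hasFDerivAt_const p.1 p.2) (hasFDerivAt_id p.2)
  have h3 : HasFDerivAt F (fderiv ℝ F p) (p.1, p.2) := by
    rw [Prod.mk.eta]; exact (hFc.differentiable (by simp) p).hasFDerivAt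
  have h4 := (h3.comp p.2 h2).hasDerivAt
  simpa [Function.comp_def] using h4.deriv

lemma continuous_mixedPartial (g : ℝ × ℝ → ℝ) (hg : ContDiff ℝ (⊤ : ℕ∞) g) :
    Continuous (mixedPartial g) := by
  have hFc : ContDiff ℝ (⊤ : ℕ∞) (fun q : ℝ×ℝ => fderiv ℝ g q (1,0)) :=
    (hg.fderiv_right (by simp)).clm_apply contDiff_const
  have : Continuous (fun p : ℝ×ℝ => fderiv ℝ (fun q : ℝ×ℝ => fderiv ℝ g q (1,0)) p (0,1)) :=
    (((hFc.fderiv_right (by simp)).clm_apply contDiff_const) : ContDiff ℝ (⊤ : ℕ∞) _).continuous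
  exact (funext (mixedPartial_eq g hg)) ▸ this

lemma sin_tangent {x y : ℝ} (hx : x ∈ Set.Icc 0 π) (hy : y ∈ Set.Icc 0 π) :
    Real.sin x ≤ Real.sin y + Real.cos y * (x - y) := by
  rcases lt_trichotomy x y with h | h | h
  · obtain ⟨c, hc, hceq⟩ := exists_hasDerivAt_eq_slope Real.sin Real.cos h
      Real.continuousOn_sin (fun t _ => Real.hasDerivAt_sin t)
    rw [eq_div_iff (by linarith : y - x ≠ 0)] at hceq
    have hcos : Real.cos y ≤ Real.cos c :=
      Real.cos_le_cos_of_nonneg_of_le_pi (le_trans hx.1 hc.1.le) hy.2 hc.2.le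
    nlinarith [sub_pos.mpr h]
  · simp [h]
  · obtain ⟨c, hc, hceq⟩ := exists_hasDerivAt_eq_slope Real.sin Real.cos h
      Real.continuousOn_sin (fun t _ => Real.hasDerivAt_sin t)
    rw [eq_div_iff (by linarith : x - y ≠ 0)] at hceq
    have hcos : Real.cos c ≤ Real.cos y :=
      Real.cos_le_cos_of_nonneg_of_le_pi hy.1 (le_trans hc.2.le hx.2) hc.1.le
    nlinarith [sub_pos.mpr h]

instance : Fact (volume unitSq < ⊤) := ⟨isCompact_unitSq.measure_lt_top⟩

lemma memL2_of_bound {f : ℝ × ℝ → ℝ} (hm : AEStronglyMeasurable f (volume.restrict unitSq))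
    {C : ℝ} (hb : ∀ᵐ q ∂(volume.restrict unitSq), ‖f q‖ ≤ C) :
    MemLp f 2 (volume.restrict unitSq) :=
  MemLp.of_bound hm C hb

lemma integrable_of_bound {f : ℝ × ℝ → ℝ} (hm : AEStronglyMeasurable f (volume.restrict unitSq))
    {C : ℝ} (hb : ∀ᵐ q ∂(volume.restrict unitSq), ‖f q‖ ≤ C) :
    Integrable f (volume.restrict unitSq) :=
  memLp_one_iff_integrable.mp (MemLp.of_bound hm C hb)

/-- A weak `L²` limit of distributional sine-Gordon solutions with values in `[0,π]` takes
values in `[0,π]` a.e. and is a distributional subsolution: for every nonnegative test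
function `h`, `∫ φ* h_{uv} − λ ∫ sin(φ*) h ≤ 0`. -/
theorem sineGordon_weak_limit_subsolution (lam : ℝ) (hlam : 0 < lam)
    (φn : ℕ → ℝ × ℝ → ℝ) (hφn : ∀ n, IsSGSolution lam (φn n))
    (φs : ℝ × ℝ → ℝ) (hφs : Measurable φs)
    (hweak : ∀ g : ℝ × ℝ → ℝ, MemLp g 2 (volume.restrict unitSq) →
      Filter.Tendsto (fun n => ∫ q in unitSq, φn n q * g q) Filter.atTop
        (nhds (∫ q in unitSq, φs q * g q))) :
    (∀ᵐ q ∂(volume.restrict unitSq), φs q ∈ Set.Icc 0 π) ∧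
    ∀ h : ℝ × ℝ → ℝ, ContDiff ℝ (⊤ : ℕ∞) h →
      tsupport h ⊆ Set.Ioo (0:ℝ) 1 ×ˢ Set.Ioo (0:ℝ) 1 → (∀ q, 0 ≤ h q) →
      (∫ q in unitSq, φs q * mixedPartial h q)
        - lam * ∫ q in unitSq, Real.sin (φs q) * h q ≤ 0 := by
  have hae_unit : ∀ᵐ q ∂(volume.restrict unitSq), q ∈ unitSq :=
    ae_restrict_mem measurableSet_unitSq
  -- Part 1 : a.e. values in [0, π]
  have hlow : volume.restrict unitSq {q | φs q < 0} = 0 := by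
    have hsub : {q | φs q < 0} ⊆ ⋃ M : ℕ, {q | φs q < 0 ∧ -(M:ℝ) ≤ φs q} := by
      intro q hq
      obtain ⟨M, hM⟩ := exists_nat_ge (-(φs q))
      exact Set.mem_iUnion.mpr ⟨M, hq, by linarith⟩
    refine measure_mono_null hsub (measure_iUnion_null fun M => ?_)
    set A := {q | φs q < 0 ∧ -(M:ℝ) ≤ φs q} with hA
    have hAm : MeasurableSet A :=
      (hφs measurableSet_Iio).inter (hφs measurableSet_Ici)
    set g := A.indicator (fun _ => (1:ℝ)) with hgdef
    have hgm : Measurable g := measurable_const.indicator hAm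
    have hg01 : ∀ q, 0 ≤ g q ∧ g q ≤ 1 := by
      intro q; by_cases hq : q ∈ A <;> simp [hgdef, hq]
    have hgL2 : MemLp g 2 (volume.restrict unitSq) :=
      memL2_of_bound hgm.aestronglyMeasurable (ae_of_all _ fun q => by
        rw [Real.norm_eq_abs, abs_of_nonneg (hg01 q).1]; exact (hg01 q).2)
    have hten := hweak g hgL2
    have hnn : ∀ n, 0 ≤ ∫ q in unitSq, φn n q * g q := fun n =>
      setIntegral_nonneg measurableSet_unitSq fun q hq =>
        mul_nonneg ((hφn n).2.1 q hq).1 (hg01 q).1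
    have hlim : 0 ≤ ∫ q in unitSq, φs q * g q := ge_of_tendsto' hten hnn
    have hnp : ∀ q, φs q * g q ≤ 0 := by
      intro q; by_cases hq : q ∈ A
      · simp only [hgdef, Set.indicator_of_mem hq, mul_one]; exact hq.1.le
      · simp [hgdef, Set.indicator_of_notMem hq]
    have hInt : Integrable (fun q => -(φs q * g q)) (volume.restrict unitSq) := by
      refine integrable_of_bound ((hφs.mul hgm).neg.aestronglyMeasurable)
        (C := M) (ae_of_all _ fun q => ?_)
      rw [norm_neg, Real.norm_eq_abs, abs_mul]
      by_cases hq : q ∈ A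
      · rw [hgdef, Set.indicator_of_mem hq]
        simp only [abs_one, mul_one]
        rw [abs_of_nonpos hq.1.le]; linarith [hq.2]
      · simp [hgdef, Set.indicator_of_notMem hq]
    have hz : (∫ q in unitSq, -(φs q * g q)) = 0 := by
      rw [integral_neg]
      have h1 : 0 ≤ ∫ q in unitSq, φs q * g q := hlim
      have h2 : (∫ q in unitSq, φs q * g q) ≤ 0 :=
        integral_nonpos hnp
      linarith
    have hae0 := (integral_eq_zero_iff_of_nonneg
      (fun q => neg_nonneg.mpr (hnp q)) hInt).mp hz
    have hnull : volume.restrict unitSq {q | ¬ (-(φs q * g q) = (0:ℝ))} = 0 := by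
      have := hae0
      rw [Filter.EventuallyEq, ae_iff] at this
      simpa using this
    refine measure_mono_null ?_ hnull
    intro q hq
    simp only [Set.mem_setOf_eq, neg_eq_zero]
    rw [hgdef, Set.indicator_of_mem hq, mul_one]
    exact ne_of_lt hq.1
  have hupp : volume.restrict unitSq {q | π < φs q} = 0 := by
    have hsub : {q | π < φs q} ⊆ ⋃ M : ℕ, {q | π < φs q ∧ φs q ≤ (M:ℝ)} := by
      intro q hq
      obtain ⟨M, hM⟩ := exists_nat_ge (φs q)
      exact Set.mem_iUnion.mpr ⟨M, hq, hM⟩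
    refine measure_mono_null hsub (measure_iUnion_null fun M => ?_)
    set B := {q | π < φs q ∧ φs q ≤ (M:ℝ)} with hB
    have hBm : MeasurableSet B :=
      (hφs measurableSet_Ioi).inter (hφs measurableSet_Iic)
    set g := B.indicator (fun _ => (1:ℝ)) with hgdef
    have hgm : Measurable g := measurable_const.indicator hBm
    have hg01 : ∀ q, 0 ≤ g q ∧ g q ≤ 1 := by
      intro q; by_cases hq : q ∈ B <;> simp [hgdef, hq]
    have hgL2 : MemLp g 2 (volume.restrict unitSq) :=
      memL2_of_bound hgm.aestronglyMeasurable (ae_of_all _ fun q => by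
        rw [Real.norm_eq_abs, abs_of_nonneg (hg01 q).1]; exact (hg01 q).2)
    have hten := hweak g hgL2
    have hIg : Integrable (fun q => π * g q) (volume.restrict unitSq) :=
      integrable_of_bound ((measurable_const.mul hgm).aestronglyMeasurable)
        (C := π) (ae_of_all _ fun q => by
          rw [Real.norm_eq_abs, abs_mul, abs_of_nonneg Real.pi_pos.le,
            abs_of_nonneg (hg01 q).1]
          nlinarith [(hg01 q).2, Real.pi_pos])
    have hIφn : ∀ n, Integrable (fun q => φn n q * g q) (volume.restrict unitSq) := by
      intro n
      refine integrable_of_bound (((hφn n).1.mul hgm).aestronglyMeasurable)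
        (C := π) ?_
      filter_upwards [hae_unit] with q hq
      rw [Real.norm_eq_abs, abs_mul]
      have h1 := (hφn n).2.1 q hq
      rw [abs_of_nonneg h1.1, abs_of_nonneg (hg01 q).1]
      nlinarith [(hg01 q).2, h1.2, h1.1, Real.pi_pos]
    have hub : ∀ n, (∫ q in unitSq, φn n q * g q) ≤ ∫ q in unitSq, π * g q := by
      intro n
      refine integral_mono_ae (hIφn n) hIg ?_
      filter_upwards [hae_unit] with q hq
      exact mul_le_mul_of_nonneg_right ((hφn n).2.1 q hq).2 (hg01 q).1
    have hlim : (∫ q in unitSq, φs q * g q) ≤ ∫ q in unitSq, π * g q :=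
      le_of_tendsto' hten hub
    have hIφs : Integrable (fun q => φs q * g q) (volume.restrict unitSq) := by
      refine integrable_of_bound ((hφs.mul hgm).aestronglyMeasurable)
        (C := M) (ae_of_all _ fun q => ?_)
      rw [Real.norm_eq_abs, abs_mul]
      by_cases hq : q ∈ B
      · rw [hgdef, Set.indicator_of_mem hq]
        simp only [abs_one, mul_one]
        rw [abs_of_nonneg (le_trans Real.pi_pos.le hq.1.le)]; exact hq.2
      · simp [hgdef, Set.indicator_of_notMem hq]
    set f := fun q => (φs q - π) * g q with hfdef
    have hfeq : f = fun q => φs q * g q - π * g q := by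
      funext q; rw [hfdef]; ring
    have hfInt : Integrable f (volume.restrict unitSq) := by
      rw [hfeq]; exact hIφs.sub hIg
    have hfnn : ∀ q, 0 ≤ f q := by
      intro q; by_cases hq : q ∈ B
      · rw [hfdef]; simp only [hgdef, Set.indicator_of_mem hq, mul_one]
        linarith [hq.1]
      · rw [hfdef]; simp [hgdef, Set.indicator_of_notMem hq]
    have hfz : (∫ q in unitSq, f q) = 0 := by
      have h1 : (∫ q in unitSq, f q)
          = (∫ q in unitSq, φs q * g q) - ∫ q in unitSq, π * g q := by
        rw [hfeq]; exact integral_sub hIφs hIg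
      have h2 : 0 ≤ ∫ q in unitSq, f q := integral_nonneg hfnn
      linarith
    have hae0 := (integral_eq_zero_iff_of_nonneg hfnn hfInt).mp hfz
    have hnull : volume.restrict unitSq {q | ¬ (f q = (0:ℝ))} = 0 := by
      have := hae0
      rw [Filter.EventuallyEq, ae_iff] at this
      simpa using this
    refine measure_mono_null ?_ hnull
    intro q hq
    simp only [Set.mem_setOf_eq]
    rw [hfdef]
    simp only [hgdef, Set.indicator_of_mem hq, mul_one]
    have : 0 < φs q - π := by linarith [hq.1]
    exact ne_of_gt this
  have part1 : ∀ᵐ q ∂(volume.restrict unitSq), φs q ∈ Set.Icc 0 π := by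
    have h1 : ∀ᵐ q ∂(volume.restrict unitSq), q ∉ {q | φs q < 0} :=
      measure_eq_zero_iff_ae_notMem.mp hlow
    have h2 : ∀ᵐ q ∂(volume.restrict unitSq), q ∉ {q | π < φs q} :=
      measure_eq_zero_iff_ae_notMem.mp hupp
    filter_upwards [h1, h2] with q hq1 hq2
    exact ⟨not_lt.mp hq1, not_lt.mp hq2⟩
  refine ⟨part1, ?_⟩
  intro h hh hsupp hpos
  have hhc : Continuous h := hh.continuous
  obtain ⟨Ch, hCh⟩ := isCompact_unitSq.exists_bound_of_continuousOn hhc.continuousOn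
  have h00 : ((0:ℝ),(0:ℝ)) ∈ unitSq := by
    constructor <;> exact ⟨le_refl 0, zero_le_one⟩
  have hCh0 : 0 ≤ Ch := le_trans (norm_nonneg _) (hCh (0,0) h00)
  have hD : Continuous (mixedPartial h) := continuous_mixedPartial h hh
  obtain ⟨CD, hCD⟩ := isCompact_unitSq.exists_bound_of_continuousOn hD.continuousOn
  have hDL2 : MemLp (mixedPartial h) 2 (volume.restrict unitSq) := by
    refine memL2_of_bound hD.aestronglyMeasurable (C := CD) ?_
    filter_upwards [hae_unit] with q hq; exact hCD q hq
  have hT1 := hweak _ hDL2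
  have hEq : ∀ n, (∫ q in unitSq, φn n q * mixedPartial h q)
      = lam * ∫ q in unitSq, Real.sin (φn n q) * h q :=
    fun n => (hφn n).2.2 h hh hsupp
  set c := fun q => Real.cos (φs q) * h q with hcdef
  have hcm : Measurable c := hφs.cos.mul hhc.measurable
  have hcbd : ∀ᵐ q ∂(volume.restrict unitSq), ‖c q‖ ≤ Ch := by
    filter_upwards [hae_unit] with q hq
    rw [hcdef, Real.norm_eq_abs, abs_mul]
    calc |Real.cos (φs q)| * |h q| ≤ 1 * |h q| :=
          mul_le_mul_of_nonneg_right (Real.abs_cos_le_one _) (abs_nonneg _)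
      _ = ‖h q‖ := by rw [one_mul, Real.norm_eq_abs]
      _ ≤ Ch := hCh q hq
  have hcL2 : MemLp c 2 (volume.restrict unitSq) :=
    memL2_of_bound hcm.aestronglyMeasurable hcbd
  have hT2 := hweak c hcL2
  have hIsinn : ∀ ψ : ℝ×ℝ→ℝ, Measurable ψ →
      Integrable (fun q => Real.sin (ψ q) * h q) (volume.restrict unitSq) := by
    intro ψ hψ
    refine integrable_of_bound ((hψ.sin.mul hhc.measurable).aestronglyMeasurable)
      (C := Ch) ?_
    filter_upwards [hae_unit] with q hq
    rw [Real.norm_eq_abs, abs_mul]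
    calc |Real.sin (ψ q)| * |h q| ≤ 1 * |h q| :=
          mul_le_mul_of_nonneg_right (Real.abs_sin_le_one _) (abs_nonneg _)
      _ = ‖h q‖ := by rw [one_mul, Real.norm_eq_abs]
      _ ≤ Ch := hCh q hq
  have hIc : Integrable (fun q => φs q * c q) (volume.restrict unitSq) := by
    refine integrable_of_bound ((hφs.mul hcm).aestronglyMeasurable)
      (C := π * Ch) ?_
    filter_upwards [hcbd, part1] with q hq1 hq2
    rw [Real.norm_eq_abs, abs_mul]
    have : |φs q| ≤ π := by rw [abs_of_nonneg hq2.1]; exact hq2.2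
    exact mul_le_mul this (by rw [← Real.norm_eq_abs]; exact hq1) (abs_nonneg _) Real.pi_pos.le
  have hIcn : ∀ n, Integrable (fun q => φn n q * c q) (volume.restrict unitSq) := by
    intro n
    refine integrable_of_bound (((hφn n).1.mul hcm).aestronglyMeasurable)
      (C := π * Ch) ?_
    filter_upwards [hcbd, hae_unit] with q hq1 hq
    rw [Real.norm_eq_abs, abs_mul]
    have hmem := (hφn n).2.1 q hq
    have : |φn n q| ≤ π := by rw [abs_of_nonneg hmem.1]; exact hmem.2
    exact mul_le_mul this (by rw [← Real.norm_eq_abs]; exact hq1) (abs_nonneg _) Real.pi_pos.le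
  set S := ∫ q in unitSq, Real.sin (φs q) * h q with hSdef
  have key : ∀ n, (∫ q in unitSq, Real.sin (φn n q) * h q)
      ≤ S + ((∫ q in unitSq, φn n q * c q) - ∫ q in unitSq, φs q * c q) := by
    intro n
    have hsubInt : Integrable (fun q => φn n q * c q - φs q * c q)
        (volume.restrict unitSq) := (hIcn n).sub hIc
    have hrhsInt : Integrable
        (fun q => Real.sin (φs q) * h q + (φn n q * c q - φs q * c q))
        (volume.restrict unitSq) := (hIsinn φs hφs).add hsubInt
    have hmono : (fun q => Real.sin (φn n q) * h q)
        ≤ᵐ[volume.restrict unitSq]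
        fun q => Real.sin (φs q) * h q + (φn n q * c q - φs q * c q) := by
      filter_upwards [hae_unit, part1] with q hq hq2
      have htan := sin_tangent ((hφn n).2.1 q hq) hq2
      have hpq := hpos q
      calc Real.sin (φn n q) * h q
          ≤ (Real.sin (φs q) + Real.cos (φs q) * (φn n q - φs q)) * h q :=
            mul_le_mul_of_nonneg_right htan hpq
        _ = Real.sin (φs q) * h q + (φn n q * c q - φs q * c q) := by
            rw [hcdef]; ring
    calc (∫ q in unitSq, Real.sin (φn n q) * h q)
        ≤ ∫ q in unitSq, (Real.sin (φs q) * h q + (φn n q * c q - φs q * c q)) :=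
          integral_mono_ae (hIsinn _ (hφn n).1) hrhsInt hmono
      _ = S + ((∫ q in unitSq, φn n q * c q) - ∫ q in unitSq, φs q * c q) := by
          have h2 : (∫ q in unitSq, (φn n q * c q - φs q * c q))
              = (∫ q in unitSq, φn n q * c q) - ∫ q in unitSq, φs q * c q :=
            integral_sub (hIcn n) hIc
          rw [integral_add (hIsinn φs hφs) hsubInt, h2]
  have hT1' : Filter.Tendsto (fun n => lam * ∫ q in unitSq, Real.sin (φn n q) * h q)
      Filter.atTop (nhds (∫ q in unitSq, φs q * mixedPartial h q)) := by
    have : (fun n => lam * ∫ q in unitSq, Real.sin (φn n q) * h q)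
        = fun n => ∫ q in unitSq, φn n q * mixedPartial h q :=
      funext fun n => (hEq n).symm
    rw [this]; exact hT1
  have hT2' : Filter.Tendsto
      (fun n => lam * (S + ((∫ q in unitSq, φn n q * c q) - ∫ q in unitSq, φs q * c q)))
      Filter.atTop (nhds (lam * (S + 0))) := by
    apply Filter.Tendsto.const_mul
    apply Filter.Tendsto.const_add
    have := hT2.sub_const (∫ q in unitSq, φs q * c q)
    rwa [sub_self] at this
  have hle : (∫ q in unitSq, φs q * mixedPartial h q) ≤ lam * (S + 0) := by
    refine le_of_tendsto_of_tendsto' hT1' hT2' fun n => ?_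
    exact mul_le_mul_of_nonneg_left (key n) hlam.le
  rw [add_zero] at hle
  linarith
end

section
/- Let n ≥ 2 be an integer and z₀ > 0. Suppose ψ : [0, z₀] → ℝ is continuous, twice continuously differentiable on (0, z₀], satisfies ψ″(z) + ψ′(z)/z = sin(ψ(z)) for all z ∈ (0, z₀], has ψ(0) = π/n and lim_{z→0⁺} ψ′(z) = 0, takes values in (0, π] on [0, z₀], and satisfies ψ(z₀) = π. Then z₀ ≥ ln(cot(π/(4n))). -/
/-!
The energy `ψ′²/2 + cos ψ` has derivative `-ψ′²/z ≤ 0`, so it never exceeds its value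
`cos (π/n) ≤ 1` at `0⁺`; as `1 - cos ψ = 2 sin² (ψ/2)`, this gives `ψ′ ≤ 2 sin (ψ/2)`.
Hence `log (tan (ψ/4))`, whose derivative is `ψ′ / (2 sin (ψ/2))`, grows with slope at most `1`
on `[0, z₀]`, from `log (tan (π/(4n))) = -log (cot (π/(4n)))` to `log (tan (π/4)) = 0`.
-/

open Real

open Set Filter Topology

noncomputable def painleveEnergy (ψ : ℝ → ℝ) (z : ℝ) : ℝ :=
  deriv ψ z ^ 2 / 2 + cos (ψ z)

section Energy

variable {ψ : ℝ → ℝ}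

theorem hasDerivAt_painleveEnergy {z : ℝ} (hz : z ≠ 0) (hψ : DifferentiableAt ℝ ψ z)
    (hψ' : DifferentiableAt ℝ (deriv ψ) z)
    (hode : deriv (deriv ψ) z + deriv ψ z / z = sin (ψ z)) :
    HasDerivAt (painleveEnergy ψ) (-(deriv ψ z ^ 2 / z)) z := by
  refine (((hψ'.hasDerivAt.pow 2).div_const 2).add
    ((hasDerivAt_cos (ψ z)).comp z hψ.hasDerivAt)).congr_deriv ?_
  rw [← hode]
  field_simp
  ring

theorem antitoneOn_painleveEnergy {b : ℝ} (hψ : ContDiffOn ℝ 2 ψ (Ioo 0 b))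
    (hode : ∀ z ∈ Ioo 0 b, deriv (deriv ψ) z + deriv ψ z / z = sin (ψ z)) :
    AntitoneOn (painleveEnergy ψ) (Ioo 0 b) := by
  have hψ' : ContDiffOn ℝ 1 (deriv ψ) (Ioo 0 b) :=
    hψ.deriv_of_isOpen isOpen_Ioo (by norm_num)
  have hE : ∀ z ∈ Ioo 0 b, HasDerivAt (painleveEnergy ψ) (-(deriv ψ z ^ 2 / z)) z :=
    fun z hz =>
    hasDerivAt_painleveEnergy hz.1.ne'
      ((hψ.differentiableOn (by norm_num)).differentiableAt (isOpen_Ioo.mem_nhds hz))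
      ((hψ'.differentiableOn one_ne_zero).differentiableAt (isOpen_Ioo.mem_nhds hz))
      (hode z hz)
  refine antitoneOn_of_deriv_nonpos (convex_Ioo 0 b)
    (fun z hz => (hE z hz).continuousAt.continuousWithinAt) ?_ ?_ <;> rw [interior_Ioo]
  · exact fun z hz => (hE z hz).differentiableAt.differentiableWithinAt
  · intro z hz
    rw [(hE z hz).deriv, neg_nonpos]
    exact div_nonneg (sq_nonneg _) hz.1.le

theorem tendsto_painleveEnergy_nhdsGT_zero (hψ : ContinuousWithinAt ψ (Ioi 0) 0)
    (hψ' : Tendsto (deriv ψ) (𝓝[>] 0) (𝓝 0)) :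
    Tendsto (painleveEnergy ψ) (𝓝[>] 0) (𝓝 (cos (ψ 0))) := by
  show Tendsto (fun z => deriv ψ z ^ 2 / 2 + cos (ψ z)) _ _
  simpa using ((hψ'.pow 2).div_const 2).add (continuous_cos.continuousAt.tendsto.comp hψ)

end Energy

theorem AntitoneOn.le_of_tendsto_nhdsGT {f : ℝ → ℝ} {a b L : ℝ}
    (hf : AntitoneOn f (Ioo a b)) (hL : Tendsto f (𝓝[>] a) (𝓝 L)) {z : ℝ}
    (hz : z ∈ Ioo a b) : f z ≤ L :=
  ge_of_tendsto hL <| by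
    filter_upwards [Ioo_mem_nhdsGT hz.1] with ε hε
    exact hf ⟨hε.1, hε.2.trans hz.2⟩ hz hε.2.le

theorem abs_le_two_mul_abs_sin_half {v x : ℝ} (h : v ^ 2 / 2 + cos x ≤ 1) :
    |v| ≤ 2 * |sin (x / 2)| := by
  have hsin : sin (x / 2) ^ 2 = 1 / 2 - cos x / 2 := by
    rw [sin_sq_eq_half_sub, mul_div_cancel₀ x two_ne_zero]
  rw [← abs_two, ← abs_mul, ← sq_le_sq]
  nlinarith

theorem hasDerivAt_log_tan_div_four {x : ℝ} (hx : sin (x / 2) ≠ 0) :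
    HasDerivAt (fun x => log (tan (x / 4))) (1 / (2 * sin (x / 2))) x := by
  have hsin : sin (x / 2) = 2 * sin (x / 4) * cos (x / 4) := by
    rw [← sin_two_mul]; ring_nf
  rw [hsin] at hx ⊢
  have hs : sin (x / 4) ≠ 0 := by rintro h; simp [h] at hx
  have hc : cos (x / 4) ≠ 0 := by rintro h; simp [h] at hx
  have htan : tan (x / 4) ≠ 0 := by rw [tan_eq_sin_div_cos]; exact div_ne_zero hs hc
  refine ((hasDerivAt_log htan).comp x
    ((hasDerivAt_tan hc).comp x ((hasDerivAt_id x).div_const 4))).congr_deriv ?_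
  rw [tan_eq_sin_div_cos]
  field_simp
  ring

theorem log_tan_div_four_sub_le {ψ : ℝ → ℝ} {a b : ℝ} (hab : a ≤ b)
    (hcont : ContinuousOn ψ (Icc a b)) (hpos : ∀ z ∈ Icc a b, 0 < sin (ψ z / 2))
    (hψ : ∀ z ∈ Ioo a b, DifferentiableAt ℝ ψ z)
    (hle : ∀ z ∈ Ioo a b, deriv ψ z ≤ 2 * sin (ψ z / 2)) :
    log (tan (ψ b / 4)) - log (tan (ψ a / 4)) ≤ b - a := by
  have hF : ∀ z ∈ Icc a b,
      HasDerivAt (fun x => log (tan (x / 4))) (1 / (2 * sin (ψ z / 2))) (ψ z) :=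
    fun z hz => hasDerivAt_log_tan_div_four (hpos z hz).ne'
  have hFψ : ∀ z ∈ Ioo a b, HasDerivAt (fun z => log (tan (ψ z / 4)))
      (1 / (2 * sin (ψ z / 2)) * deriv ψ z) z := fun z hz =>
    (hF z (Ioo_subset_Icc_self hz)).comp z (hψ z hz).hasDerivAt
  simpa using (convex_Icc a b).image_sub_le_mul_sub_of_deriv_le (C := 1)
    (f := fun z => log (tan (ψ z / 4)))
    (fun z hz => (hF z hz).continuousAt.comp_continuousWithinAt (hcont z hz))
    (by
      rw [interior_Icc]
      exact fun z hz => (hFψ z hz).differentiableAt.differentiableWithinAt)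
    (by
      rw [interior_Icc]
      intro z hz
      rw [(hFψ z hz).deriv, one_div_mul_eq_div,
        div_le_one (by linarith [hpos z (Ioo_subset_Icc_self hz)])]
      exact hle z hz)
    a (left_mem_Icc.mpr hab) b (right_mem_Icc.mpr hab) hab

theorem amsler_singularity_lower_bound_general (n : ℕ) (z₀ : ℝ) (hz₀ : 0 < z₀)
    (ψ : ℝ → ℝ)
    (hcont : ContinuousOn ψ (Set.Icc 0 z₀))
    (hC2 : ContDiffOn ℝ 2 ψ (Set.Ioc 0 z₀))
    (hode : ∀ z ∈ Set.Ioc (0:ℝ) z₀, deriv (deriv ψ) z + deriv ψ z / z = Real.sin (ψ z))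
    (hinit : ψ 0 = π / n)
    (hinit' : Filter.Tendsto (deriv ψ) (nhdsWithin 0 (Set.Ioi 0)) (nhds 0))
    (hrange : ∀ z ∈ Set.Icc (0:ℝ) z₀, ψ z ∈ Set.Ioc 0 π)
    (hsing : ψ z₀ = π) :
    Real.log (Real.cot (π / (4 * n))) ≤ z₀ := by
  have hψ : ContDiffOn ℝ 2 ψ (Ioo 0 z₀) := hC2.mono Ioo_subset_Ioc_self
  have hsin : ∀ z ∈ Icc 0 z₀, 0 < sin (ψ z / 2) := fun z hz =>
    sin_pos_of_pos_of_lt_pi (by linarith [(hrange z hz).1])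
      (by linarith [(hrange z hz).2, pi_pos])
  have hanti := antitoneOn_painleveEnergy hψ fun z hz => hode z (Ioo_subset_Ioc_self hz)
  have hlim := tendsto_painleveEnergy_nhdsGT_zero
    ((hcont 0 (left_mem_Icc.mpr hz₀.le)).mono_of_mem_nhdsWithin (Icc_mem_nhdsGT hz₀)) hinit'
  have henergy : ∀ z ∈ Ioo 0 z₀, painleveEnergy ψ z ≤ cos (ψ 0) :=
    fun z hz => hanti.le_of_tendsto_nhdsGT hlim hz
  have hslope : ∀ z ∈ Ioo 0 z₀, deriv ψ z ≤ 2 * sin (ψ z / 2) := fun z hz => by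
    have h := abs_le_two_mul_abs_sin_half ((henergy z hz).trans (cos_le_one _))
    rw [abs_of_pos (hsin z (Ioo_subset_Icc_self hz))] at h
    exact (le_abs_self _).trans h
  have hgrowth := log_tan_div_four_sub_le hz₀.le hcont hsin
    (fun z hz => (hψ.differentiableOn (by norm_num)).differentiableAt (isOpen_Ioo.mem_nhds hz))
    hslope
  rw [hsing, hinit, tan_pi_div_four, log_one] at hgrowth
  rw [← tan_inv_eq_cot, log_inv, show π / (4 * n) = π / n / 4 by ring]
  linarith

/-- Lower bound on the location of the singularity of the `n`-fold Amsler surface: if `ψ`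
solves `ψ″ + ψ′/z = sin ψ` on `(0, z₀]` with `ψ(0) = π/n`, `ψ′(0⁺) = 0`, takes values in
`(0,π]` on `[0,z₀]`, and `ψ(z₀) = π`, then `z₀ ≥ ln(cot(π/(4n)))`. -/
theorem amsler_singularity_lower_bound (n : ℕ) (hn : 2 ≤ n) (z₀ : ℝ) (hz₀ : 0 < z₀)
    (ψ : ℝ → ℝ)
    (hcont : ContinuousOn ψ (Set.Icc 0 z₀))
    (hC2 : ContDiffOn ℝ 2 ψ (Set.Ioc 0 z₀))
    (hode : ∀ z ∈ Set.Ioc (0:ℝ) z₀, deriv (deriv ψ) z + deriv ψ z / z = Real.sin (ψ z))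
    (hinit : ψ 0 = π / n)
    (hinit' : Filter.Tendsto (deriv ψ) (nhdsWithin 0 (Set.Ioi 0)) (nhds 0))
    (hrange : ∀ z ∈ Set.Icc (0:ℝ) z₀, ψ z ∈ Set.Ioc 0 π)
    (hsing : ψ z₀ = π) :
    Real.log (Real.cot (π / (4 * n))) ≤ z₀ :=
  amsler_singularity_lower_bound_general n z₀ hz₀ ψ hcont hC2 hode hinit hinit' hrange hsing
end
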